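/- Let I ⊆ ℂ[z₁,…,z_m] be an ideal containing the power 𝔪₀^N of the maximal ideal 𝔪₀ at 0 for some N. Then I equals its envelope at 0: I₀^e = I, where I₀^e = { p ∈ ℂ[z] : q(D)p|₀ = 0 for all q ∈ 𝕍₀(I) } and 𝕍₀(I) = { q ∈ ℂ[z] : q(D)p|₀ = 0 for all p ∈ I }. -/

import Mathlib

open MvPolynomial Complex Finset

/-- Iterated partial-derivative operator `∂^β` on polynomials. -/
noncomputable def Dpow {m : ℕ} (β : Fin m →₀ ℕ) :
    Module.End ℂ (MvPolynomial (Fin m) ℂ) :=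
  (((List.finRange m).map fun j =>
    ((MvPolynomial.pderiv j).toLinearMap : Module.End ℂ (MvPolynomial (Fin m) ℂ)) ^ (β j))).prod

/-- The constant-coefficient differential operator `q(D)` applied to `p`. -/
noncomputable def diffOp {m : ℕ} (q p : MvPolynomial (Fin m) ℂ) : MvPolynomial (Fin m) ℂ :=
  ∑ β ∈ q.support, q.coeff β • Dpow β p

/-- `q* `: conjugate the coefficients of `q`. -/
noncomputable def starPoly {m : ℕ} (q : MvPolynomial (Fin m) ℂ) : MvPolynomial (Fin m) ℂ :=
  MvPolynomial.map (starRingEnd ℂ) q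

/-- The Fock pairing at `w`: `⟨p,q⟩_w = (q*(D)p)(w)`. -/
noncomputable def fock {m : ℕ} (w : Fin m → ℂ) (p q : MvPolynomial (Fin m) ℂ) : ℂ :=
  MvPolynomial.eval w (diffOp (starPoly q) p)

/-- Multi-index factorial `α! = α₁!⋯α_m!`. -/
def mfac {m : ℕ} (α : Fin m →₀ ℕ) : ℕ := ∏ i : Fin m, (α i).factorial

/-- Total degree `|α|` of a multi-index. -/
def mdeg {m : ℕ} (α : Fin m →₀ ℕ) : ℕ := ∑ i : Fin m, α i

/-- Multi-index binomial coefficient. -/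
def mbinom {m : ℕ} (α k : Fin m →₀ ℕ) : ℕ := ∏ i : Fin m, (α i).choose (k i)

/-- The characteristic space `𝕍_w(I)`. -/
noncomputable def Vchar {m : ℕ} (w : Fin m → ℂ) (I : Set (MvPolynomial (Fin m) ℂ)) :
    Set (MvPolynomial (Fin m) ℂ) :=
  {q | ∀ p ∈ I, MvPolynomial.eval w (diffOp q p) = 0}

/-- The auxiliary space `𝕍̃_w(I)`. -/
noncomputable def Vtilde {m : ℕ} (w : Fin m → ℂ) (I : Set (MvPolynomial (Fin m) ℂ)) :
    Set (MvPolynomial (Fin m) ℂ) :=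
  {q | ∀ j : Fin m, MvPolynomial.pderiv j q ∈ Vchar w I}

/-! At the origin, `q(D)p|₀ = ∑_β q_β β! p_β`, so a polynomial `q` acts on `ℂ[z]` as the linear
functional sending `z^β` to `β! q_β`. Conversely, a linear functional `φ` comes from such a `q`
exactly when it sees only finitely many monomials, which holds as soon as `φ` vanishes on `𝔪₀^N`:
take `q_β = φ(z^β) / β!`. If `p ∉ I`, choose `φ` vanishing on `I ⊇ 𝔪₀^N` with `φ p ≠ 0`; the
corresponding `q` lies in `𝕍₀(I)` and `q(D)p|₀ = φ p ≠ 0`, so `p` is not in the envelope. -/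

namespace MvPolynomial

variable {σ R : Type*} [CommSemiring R]

lemma pderiv_pow_monomial (j : σ) (k : ℕ) (α : σ →₀ ℕ) (c : R) :
    ((pderiv j).toLinearMap ^ k : Module.End R (MvPolynomial σ R)) (monomial α c) =
      monomial (α - Finsupp.single j k) ((α j).descFactorial k * c) := by
  induction k with
  | zero => simp
  | succ k ih =>
    rw [pow_succ', Module.End.mul_apply, ih, Derivation.coeFn_coe, pderiv_monomial, tsub_tsub,
      ← Finsupp.single_add, Finsupp.tsub_apply, Finsupp.single_eq_same, Nat.descFactorial_succ]
    push_cast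
    rw [mul_comm, mul_assoc]

lemma list_prod_pderiv_pow_monomial (β : σ →₀ ℕ) {L : List σ} (hL : L.Nodup) (α : σ →₀ ℕ)
    (c : R) :
    (L.map fun j => ((pderiv j).toLinearMap ^ β j : Module.End R (MvPolynomial σ R))).prod
        (monomial α c) =
      monomial (α - (L.map fun j => Finsupp.single j (β j)).sum)
        ((L.map fun j => ((α j).descFactorial (β j) : R)).prod * c) := by
  induction L with
  | nil => simp
  | cons j L ih =>
    obtain ⟨hj, hL⟩ := List.nodup_cons.mp hL
    have hLj : (L.map fun i => Finsupp.single i (β i)).sum j = 0 := by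
      rw [← Finsupp.applyAddHom_apply, map_list_sum, List.map_map]
      exact List.sum_eq_zero fun x hx => by
        obtain ⟨i, hi, rfl⟩ := List.mem_map.mp hx
        exact Finsupp.single_eq_of_ne (ne_of_mem_of_not_mem hi hj).symm
    simp only [List.map_cons, List.prod_cons, List.sum_cons, Module.End.mul_apply, ih hL,
      pderiv_pow_monomial, tsub_tsub, Finsupp.tsub_apply, hLj, tsub_zero, add_comm, mul_assoc]

end MvPolynomial

lemma Dpow_monomial {m : ℕ} (β α : Fin m →₀ ℕ) (c : ℂ) :
    Dpow β (monomial α c) =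
      monomial (α - β) ((∏ j, ((α j).descFactorial (β j) : ℂ)) * c) := by
  rw [Dpow, list_prod_pderiv_pow_monomial β (List.nodup_finRange m), ← Fin.sum_univ_def,
    ← Fin.prod_univ_def, Finsupp.univ_sum_single]

lemma constantCoeff_Dpow_monomial {m : ℕ} (β α : Fin m →₀ ℕ) (c : ℂ) :
    constantCoeff (Dpow β (monomial α c)) = if α = β then (mfac β : ℂ) * c else 0 := by
  rw [Dpow_monomial, constantCoeff_monomial]
  by_cases hαβ : α = β
  · subst hαβ
    simp [mfac, Nat.descFactorial_self]
  · rw [if_neg hαβ, ite_eq_right_iff, tsub_eq_zero_iff_le]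
    intro hle
    obtain ⟨j, hj⟩ : ∃ j, α j < β j := by
      by_contra! h
      exact hαβ (le_antisymm hle h)
    rw [Finset.prod_eq_zero (Finset.mem_univ j) (by simpa [Nat.descFactorial_eq_zero_iff_lt]),
      zero_mul]

lemma constantCoeff_Dpow {m : ℕ} (β : Fin m →₀ ℕ) (p : MvPolynomial (Fin m) ℂ) :
    constantCoeff (Dpow β p) = mfac β * p.coeff β := by
  induction p using MvPolynomial.induction_on' with
  | monomial α c => rw [constantCoeff_Dpow_monomial, coeff_monomial, mul_ite, mul_zero]
  | add p q hp hq => rw [map_add, map_add, hp, hq, coeff_add, mul_add]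

lemma mfac_ne_zero {m : ℕ} (β : Fin m →₀ ℕ) : mfac β ≠ 0 :=
  Finset.prod_ne_zero_iff.mpr fun i _ => Nat.factorial_ne_zero (β i)

lemma eval_zero_diffOp {m : ℕ} (q p : MvPolynomial (Fin m) ℂ) :
    eval 0 (diffOp q p) = ∑ β ∈ p.support, q.coeff β * mfac β * p.coeff β := by
  have hq : ∑ β ∈ q.support, q.coeff β * mfac β * p.coeff β =
      ∑ β ∈ q.support ∩ p.support, q.coeff β * mfac β * p.coeff β :=
    (Finset.sum_subset Finset.inter_subset_left fun β _ hβ => by simp_all).symm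
  have hp : ∑ β ∈ q.support ∩ p.support, q.coeff β * mfac β * p.coeff β =
      ∑ β ∈ p.support, q.coeff β * mfac β * p.coeff β :=
    Finset.sum_subset Finset.inter_subset_right fun β _ hβ => by simp_all
  rw [diffOp, map_sum, ← hp, ← hq]
  refine Finset.sum_congr rfl fun β _ => ?_
  rw [smul_eval, eval_zero, constantCoeff_Dpow, mul_assoc]

lemma eval_zero_diffOp_eq_of_coeff_mul_mfac {m : ℕ} {q : MvPolynomial (Fin m) ℂ}
    {φ : Module.Dual ℂ (MvPolynomial (Fin m) ℂ)} (hq : ∀ β, q.coeff β * mfac β = φ (monomial β 1))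
    (p : MvPolynomial (Fin m) ℂ) : eval 0 (diffOp q p) = φ p := by
  conv_rhs => rw [p.as_sum, map_sum]
  rw [eval_zero_diffOp]
  refine Finset.sum_congr rfl fun β _ => ?_
  rw [hq, mul_comm, ← smul_eq_mul, ← map_smul, smul_monomial, smul_eq_mul, mul_one]

lemma exists_coeff_mul_mfac_eq {m N : ℕ} {φ : Module.Dual ℂ (MvPolynomial (Fin m) ℂ)}
    (hφ : ∀ r ∈ idealOfVars (Fin m) ℂ ^ N, φ r = 0) :
    ∃ q : MvPolynomial (Fin m) ℂ, ∀ β, q.coeff β * mfac β = φ (monomial β 1) := by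
  set c : (Fin m →₀ ℕ) → ℂ := fun β => φ (monomial β 1) / mfac β
  have hc : c.support.Finite := (Finsupp.finite_of_degree_lt N).subset fun β hβ => by
    by_contra hdeg
    have hmem :=
      (monomial_mem_pow_idealOfVars_iff N β (one_ne_zero (α := ℂ))).mpr (not_lt.mp hdeg)
    exact hβ (by simp [c, hφ _ hmem])
  refine ⟨∑ β ∈ hc.toFinset, monomial β (c β), fun β => ?_⟩
  have hcβ : c β * mfac β = φ (monomial β 1) :=
    div_mul_cancel₀ _ (Nat.cast_ne_zero.mpr (mfac_ne_zero β))
  rw [← hcβ, coeff_sum]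
  simp only [coeff_monomial, Finset.sum_ite_eq']
  split_ifs with h
  · rfl
  · rw [Function.notMem_support.mp (mt hc.mem_toFinset.mpr h), zero_mul]

/-- if `𝔪₀^N ⊆ I` then the envelope `I₀^e` of `I` at `0` equals `I`. -/
theorem envelope_eq_of_maximalIdealPow_le {m N : ℕ}
    (I : Ideal (MvPolynomial (Fin m) ℂ))
    (h : (Ideal.span (Set.range (MvPolynomial.X : Fin m → MvPolynomial (Fin m) ℂ))) ^ N ≤ I) :
    {p : MvPolynomial (Fin m) ℂ |
        ∀ q ∈ Vchar (0 : Fin m → ℂ) (I : Set (MvPolynomial (Fin m) ℂ)),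
          MvPolynomial.eval (0 : Fin m → ℂ) (diffOp q p) = 0}
      = (I : Set (MvPolynomial (Fin m) ℂ)) := by
  refine Set.Subset.antisymm (fun p hp => ?_) fun p hp q hq => hq p hp
  by_contra hpI
  obtain ⟨φ, hφp, hφI⟩ :=
    Submodule.exists_dual_map_eq_bot_of_notMem (p := I.restrictScalars ℂ) hpI inferInstance
  rw [← LinearMap.le_ker_iff_map] at hφI
  obtain ⟨q, hq⟩ := exists_coeff_mul_mfac_eq fun r hr => hφI (h hr)
  have hqV : q ∈ Vchar 0 I := fun r hr =>
    (eval_zero_diffOp_eq_of_coeff_mul_mfac hq r).trans (hφI hr)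
  exact hφp ((eval_zero_diffOp_eq_of_coeff_mul_mfac hq p).symm.trans (hp q hqV))
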